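/- arXiv:2010.00566 — 2 statements merged into one kernel-verified Lean document; each statement's English description precedes it below -/
import Mathlib

section
/- Let X, Y be real random variables symmetric about the origin such that |φ_X| and |φ_Y| are decreasing on [0,∞). If Z has law pμ_X + (1−p)μ_Y for some p ∈ [0,1], then |φ_Z| is decreasing on [0,∞), so Z is reasonable with respect to cos. -/
open MeasureTheory Set Complex BoundedContinuousFunction
open scoped ENNReal

/-!
Symmetry makes each characteristic function real. A continuous real function with `f 0 ≥ 0`
whose modulus decreases on `[0, ∞)` cannot change sign there (a zero would force it to vanish
from then on), so `φ_X = |φ_X|` and `φ_Y = |φ_Y|` on `[0, ∞)`. Hence `φ_Z`, a nonnegative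
combination of `φ_X` and `φ_Y`, is nonnegative and decreasing there. Finally
`sup_a E cos (a + d Z) = sup_a Re (e^{ia} φ_Z(d)) = |φ_Z(d)|`.
-/

lemma charFun_smul_add_smul {E : Type*} [MeasurableSpace E] [NormedAddCommGroup E]
    [InnerProductSpace ℝ E] [OpensMeasurableSpace E] (μ ν : Measure E) [IsFiniteMeasure μ]
    [IsFiniteMeasure ν]
    {a b : ℝ≥0∞} (ha : a ≠ ∞) (hb : b ≠ ∞) (t : E) :
    charFun (a • μ + b • ν) t = a.toReal * charFun μ t + b.toReal * charFun ν t := by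
  simp only [charFun_eq_integral_innerProbChar]
  rw [integral_add_measure ((innerProbChar t).integrable μ |>.smul_measure ha)
    ((innerProbChar t).integrable ν |>.smul_measure hb), integral_smul_measure,
    integral_smul_measure, real_smul, real_smul]

lemma charFun_map_eq_integral {Ω : Type*} [MeasurableSpace Ω] {P : Measure Ω} {X : Ω → ℝ}
    (hX : AEMeasurable X P) (t : ℝ) :
    charFun (P.map X) t = ∫ ω, exp (I * (t * X ω)) ∂P := by
  rw [charFun_apply_real, integral_map hX (by fun_prop)]
  simp only [mul_comm I]

lemma re_charFun_of_map_neg {μ : Measure ℝ} (hμ : μ.map (fun x => -x) = μ) (t : ℝ) :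
    ((charFun μ t).re : ℂ) = charFun μ t := by
  rw [← conj_eq_iff_re, ← charFun_neg, ← neg_one_mul, ← charFun_map_mul]
  simp only [neg_one_mul, hμ]

lemma nonneg_of_antitoneOn_abs {f : ℝ → ℝ} (hf : Continuous f) (h0 : 0 ≤ f 0)
    (hdec : AntitoneOn (fun t => |f t|) (Ici 0)) {t : ℝ} (ht : 0 ≤ t) : 0 ≤ f t := by
  by_contra! hneg
  obtain ⟨s, hs, hfs⟩ := intermediate_value_Icc' ht hf.continuousOn ⟨hneg.le, h0⟩
  have := hdec (mem_Ici.2 hs.1) (mem_Ici.2 ht) hs.2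
  simp only [hfs, abs_zero, abs_nonpos_iff] at this
  exact hneg.ne this

lemma charFun_eq_norm_of_antitoneOn {μ : Measure ℝ} [IsFiniteMeasure μ]
    (hμ : μ.map (fun x => -x) = μ) (hdec : AntitoneOn (fun t => ‖charFun μ t‖) (Ici 0))
    {t : ℝ} (ht : 0 ≤ t) : charFun μ t = ‖charFun μ t‖ := by
  have hnorm : ∀ s, ‖charFun μ s‖ = |(charFun μ s).re| := fun s => by
    conv_lhs => rw [← re_charFun_of_map_neg hμ, norm_real, Real.norm_eq_abs]
  have hre : 0 ≤ (charFun μ t).re := by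
    refine nonneg_of_antitoneOn_abs (continuous_re.comp continuous_charFun) ?_ ?_ ht
    · simp
    · simpa only [Function.comp_apply, ← hnorm] using hdec
  rw [hnorm, abs_of_nonneg hre, re_charFun_of_map_neg hμ]

lemma antitoneOn_norm_charFun_smul_add_smul {μ ν : Measure ℝ} [IsFiniteMeasure μ]
    [IsFiniteMeasure ν] (hμ : μ.map (fun x => -x) = μ) (hν : ν.map (fun x => -x) = ν)
    (hμdec : AntitoneOn (fun t => ‖charFun μ t‖) (Ici 0))
    (hνdec : AntitoneOn (fun t => ‖charFun ν t‖) (Ici 0))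
    {a b : ℝ≥0∞} (ha : a ≠ ∞) (hb : b ≠ ∞) :
    AntitoneOn (fun t => ‖charFun (a • μ + b • ν) t‖) (Ici 0) := by
  have hmix : EqOn (fun t => ‖charFun (a • μ + b • ν) t‖)
      (fun t => a.toReal * ‖charFun μ t‖ + b.toReal * ‖charFun ν t‖) (Ici 0) := by
    intro t ht
    dsimp only
    rw [charFun_smul_add_smul μ ν ha hb, charFun_eq_norm_of_antitoneOn hμ hμdec ht,
      charFun_eq_norm_of_antitoneOn hν hνdec ht]
    norm_cast
    rw [norm_norm, norm_norm]
    exact Real.norm_of_nonneg (by positivity)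
  refine AntitoneOn.congr (fun s hs t ht hst => ?_) hmix.symm
  have := hμdec hs ht hst
  have := hνdec hs ht hst
  gcongr

lemma iSup_re_exp_mul_I_mul (w : ℂ) : ⨆ a : ℝ, (exp (a * I) * w).re = ‖w‖ := by
  have hle : ∀ a : ℝ, (exp (a * I) * w).re ≤ ‖w‖ := fun a =>
    (re_le_norm _).trans_eq (by rw [norm_mul, norm_exp_ofReal_mul_I, one_mul])
  have hmax : exp (↑(-w.arg) * I) * w = ‖w‖ := by
    nth_rewrite 2 [← norm_mul_exp_arg_mul_I w]
    rw [mul_left_comm, ← Complex.exp_add, ofReal_neg, neg_mul, neg_add_cancel, Complex.exp_zero,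
      mul_one]
  refine le_antisymm (ciSup_le hle) (le_ciSup_of_le ⟨‖w‖, ?_⟩ (-w.arg) ?_)
  · rintro _ ⟨a, rfl⟩
    exact hle a
  · rw [hmax, ofReal_re]

lemma integral_cos_add_mul_eq_re {μ : Measure ℝ} [IsFiniteMeasure μ] (a d : ℝ) :
    ∫ x, Real.cos (a + d * x) ∂μ = (exp (a * I) * charFun μ d).re := by
  have hint : Integrable (fun x : ℝ => exp (a * I) * exp (d * x * I)) μ := by
    simpa [innerProbChar_apply, mul_comm] using
      ((innerProbChar d).integrable μ).const_mul _
  rw [charFun_apply_real, ← integral_const_mul, ← reCLM_apply, ← reCLM.integral_comp_comm hint]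
  congr 1 with x
  rw [reCLM_apply, ← Complex.exp_add, ← exp_ofReal_mul_I_re]
  push_cast
  ring_nf

lemma iSup_integral_cos_add_mul_eq_norm_charFun {Ω : Type*} [MeasurableSpace Ω] {P : Measure Ω}
    [IsFiniteMeasure P] {Z : Ω → ℝ} (hZ : AEMeasurable Z P) (d : ℝ) :
    ⨆ a : ℝ, ∫ ω, Real.cos (a + d * Z ω) ∂P = ‖charFun (P.map Z) d‖ := by
  have hlaw : ∀ a : ℝ, ∫ ω, Real.cos (a + d * Z ω) ∂P = ∫ x, Real.cos (a + d * x) ∂(P.map Z) :=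
    fun a => (integral_map (f := fun x => Real.cos (a + d * x)) hZ (by fun_prop)).symm
  simp only [hlaw, integral_cos_add_mul_eq_re]
  exact iSup_re_exp_mul_I_mul _

theorem stmt10_general {Ω : Type*} [MeasurableSpace Ω] (P : Measure Ω) [IsProbabilityMeasure P]
    {Ω' : Type*} [MeasurableSpace Ω'] (P' : Measure Ω') [IsProbabilityMeasure P']
    (X Y : Ω → ℝ) (hX : Measurable X) (hY : Measurable Y)
    (hXsymm : P.map X = P.map (fun ω => -X ω))
    (hYsymm : P.map Y = P.map (fun ω => -Y ω))
    (φX φY : ℝ → ℂ)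
    (hφX : ∀ t : ℝ, φX t = ∫ ω, Complex.exp (Complex.I * (t * X ω)) ∂P)
    (hφY : ∀ t : ℝ, φY t = ∫ ω, Complex.exp (Complex.I * (t * Y ω)) ∂P)
    (hXdec : AntitoneOn (fun t : ℝ => ‖φX t‖) (Ici 0))
    (hYdec : AntitoneOn (fun t : ℝ => ‖φY t‖) (Ici 0))
    (p : ℝ)
    (Z : Ω' → ℝ) (hZ : Measurable Z)
    (hZlaw : P'.map Z = ENNReal.ofReal p • P.map X + ENNReal.ofReal (1 - p) • P.map Y)
    (φZ : ℝ → ℂ)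
    (hφZ : ∀ t : ℝ, φZ t = ∫ ω, Complex.exp (Complex.I * (t * Z ω)) ∂P') :
    AntitoneOn (fun t : ℝ => ‖φZ t‖) (Ici 0) ∧
      AntitoneOn (fun d : ℝ => ⨆ a : ℝ, ∫ ω, Real.cos (a + d * Z ω) ∂P') (Ioi 0) := by
  have hφX' : φX = charFun (P.map X) :=
    funext fun t => (hφX t).trans (charFun_map_eq_integral hX.aemeasurable t).symm
  have hφY' : φY = charFun (P.map Y) :=
    funext fun t => (hφY t).trans (charFun_map_eq_integral hY.aemeasurable t).symm
  have hφZ' : φZ = charFun (P'.map Z) :=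
    funext fun t => (hφZ t).trans (charFun_map_eq_integral hZ.aemeasurable t).symm
  have hlaw_symm {W : Ω → ℝ} (hW : Measurable W) (h : P.map W = P.map (fun ω => -W ω)) :
      (P.map W).map (fun x => -x) = P.map W := by
    rw [Measure.map_map measurable_neg hW]
    exact h.symm
  have hZdec : AntitoneOn (fun t => ‖φZ t‖) (Ici 0) := by
    subst hφX' hφY' hφZ'
    rw [hZlaw]
    exact antitoneOn_norm_charFun_smul_add_smul (hlaw_symm hX hXsymm) (hlaw_symm hY hYsymm)
      hXdec hYdec ENNReal.ofReal_ne_top ENNReal.ofReal_ne_top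
  refine ⟨hZdec, ?_⟩
  simp only [iSup_integral_cos_add_mul_eq_norm_charFun hZ.aemeasurable, ← hφZ']
  exact hZdec.mono Ioi_subset_Ici_self

/-- Let `X, Y` be real random variables symmetric about the origin with `|φ_X|`
and `|φ_Y|` decreasing on `[0,∞)`. If `Z` has law `p μ_X + (1−p) μ_Y` for some `p ∈ [0,1]`,
then `|φ_Z|` is decreasing on `[0,∞)`, so `Z` is reasonable with respect to `cos`. -/
theorem stmt10 {Ω : Type*} [MeasurableSpace Ω] (P : Measure Ω) [IsProbabilityMeasure P]
    {Ω' : Type*} [MeasurableSpace Ω'] (P' : Measure Ω') [IsProbabilityMeasure P']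
    (X Y : Ω → ℝ) (hX : Measurable X) (hY : Measurable Y)
    (hXsymm : P.map X = P.map (fun ω => -X ω))
    (hYsymm : P.map Y = P.map (fun ω => -Y ω))
    (φX φY : ℝ → ℂ)
    (hφX : ∀ t : ℝ, φX t = ∫ ω, Complex.exp (Complex.I * (t * X ω)) ∂P)
    (hφY : ∀ t : ℝ, φY t = ∫ ω, Complex.exp (Complex.I * (t * Y ω)) ∂P)
    (hXdec : AntitoneOn (fun t : ℝ => ‖φX t‖) (Ici 0))
    (hYdec : AntitoneOn (fun t : ℝ => ‖φY t‖) (Ici 0))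
    (p : ℝ) (hp0 : 0 ≤ p) (hp1 : p ≤ 1)
    (Z : Ω' → ℝ) (hZ : Measurable Z)
    (hZlaw : P'.map Z = ENNReal.ofReal p • P.map X + ENNReal.ofReal (1 - p) • P.map Y)
    (φZ : ℝ → ℂ)
    (hφZ : ∀ t : ℝ, φZ t = ∫ ω, Complex.exp (Complex.I * (t * Z ω)) ∂P') :
    AntitoneOn (fun t : ℝ => ‖φZ t‖) (Ici 0) ∧
      AntitoneOn (fun d : ℝ => ⨆ a : ℝ, ∫ ω, Real.cos (a + d * Z ω) ∂P') (Ioi 0) :=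
  stmt10_general P P' X Y hX hY hXsymm hYsymm φX φY hφX hφY hXdec hYdec p Z hZ hZlaw φZ hφZ
end

section
/- If X₁ ~ Bernoulli(1/2) and X₂ ~ N(0, σ²) are independent, then X = X₁ + X₂ is not reasonable with respect to cos for any σ > 0: |φ_X| vanishes at odd multiples of π but is not identically zero beyond them, hence |φ_X| is not decreasing on [0,∞). -/
/-!
By independence `φ = φ_{X₁} φ_{X₂}`, with `φ_{X₁}(t) = (1 + e^{it})/2` and `φ_{X₂}` a Gaussian,
which never vanishes. Hence `φ(π) = 0 ≠ φ(2π)`, so `‖φ‖` increases from `π` to `2π`. Writing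
`E[cos(a + dX)] = Re(e^{ia} φ(d))` and choosing `a = -arg φ(d)` shows that
`sup_a E[cos(a + dX)] = ‖φ(d)‖`, so the second function increases there as well.
-/

open MeasureTheory ProbabilityTheory Set

section

open Complex InnerProductSpace

variable {E : Type*} [MeasurableSpace E] [NormedAddCommGroup E] [InnerProductSpace ℝ E]
  {μ ν : Measure E}

lemma integrable_exp_inner_mul_I [OpensMeasurableSpace E] [IsFiniteMeasure μ] (t : E) :
    Integrable (fun x ↦ cexp (⟪x, t⟫_ℝ * I)) μ :=
  .of_bound (by fun_prop) 1 (ae_of_all _ fun x ↦ (norm_exp_ofReal_mul_I _).le)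

lemma charFun_add_measure [OpensMeasurableSpace E] [IsFiniteMeasure μ] [IsFiniteMeasure ν]
    (t : E) :
    charFun (μ + ν) t = charFun μ t + charFun ν t :=
  integral_add_measure (integrable_exp_inner_mul_I t) (integrable_exp_inner_mul_I t)

lemma charFun_smul_measure (c : ENNReal) (t : E) :
    charFun (c • μ) t = c.toReal * charFun μ t := by
  simp only [charFun_apply, integral_smul_measure, real_smul]

lemma charFun_smul_dirac_add_smul_dirac (a b x y t : ℝ) (ha : 0 ≤ a) (hb : 0 ≤ b) :
    charFun (ENNReal.ofReal a • Measure.dirac x + ENNReal.ofReal b • Measure.dirac y) t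
      = a * cexp (t * x * I) + b * cexp (t * y * I) := by
  have := (Measure.dirac x).smul_finite (ENNReal.ofReal_ne_top (r := a))
  have := (Measure.dirac y).smul_finite (ENNReal.ofReal_ne_top (r := b))
  rw [charFun_add_measure, charFun_smul_measure, charFun_smul_measure, charFun_dirac,
    charFun_dirac, ENNReal.toReal_ofReal ha, ENNReal.toReal_ofReal hb]
  simp

lemma charFun_map_real {Ω : Type*} [MeasurableSpace Ω] {P : Measure Ω} {X : Ω → ℝ}
    (hX : AEMeasurable X P) (t : ℝ) :
    charFun (P.map X) t = ∫ ω, cexp (t * X ω * I) ∂P := by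
  rw [charFun_apply_real, integral_map hX (by fun_prop)]

lemma integral_cos_add_mul_eq_re_charFun (μ : Measure ℝ) [IsFiniteMeasure μ] (a d : ℝ) :
    ∫ x, Real.cos (a + d * x) ∂μ = (cexp (a * I) * charFun μ d).re := by
  rw [charFun_apply, ← integral_const_mul, ← RCLike.re_eq_complex_re,
    ← integral_re ((integrable_exp_inner_mul_I d).const_mul _)]
  congr with x
  rw [RCLike.re_to_complex, ← exp_add, ← exp_ofReal_mul_I_re, Real.inner_apply]
  push_cast
  ring_nf

lemma iSup_integral_cos_add_mul_eq_norm_charFun_s12 (μ : Measure ℝ) [IsFiniteMeasure μ] (d : ℝ) :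
    ⨆ a : ℝ, ∫ x, Real.cos (a + d * x) ∂μ = ‖charFun μ d‖ := by
  simp_rw [integral_cos_add_mul_eq_re_charFun]
  set z := charFun μ d
  have hle (a : ℝ) : (cexp (a * I) * z).re ≤ ‖z‖ :=
    (re_le_norm _).trans (by rw [norm_mul, norm_exp_ofReal_mul_I, one_mul])
  refine le_antisymm (ciSup_le hle) (le_ciSup_of_le ⟨‖z‖, ?_⟩ (-arg z) ?_)
  · rintro _ ⟨a, rfl⟩
    exact hle a
  · apply le_of_eq
    calc ‖z‖ = (cexp (↑(-arg z) * I) * (‖z‖ * cexp (arg z * I))).re := by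
            rw [mul_left_comm, ← exp_add, ofReal_neg, neg_mul, neg_add_cancel, exp_zero,
              mul_one, ofReal_re]
      _ = (cexp (↑(-arg z) * I) * z).re := by rw [norm_mul_exp_arg_mul_I]

end

theorem stmt12_general {Ω : Type*} [MeasurableSpace Ω] (P : Measure Ω) [IsProbabilityMeasure P]
    (X₁ X₂ : Ω → ℝ) (hX₁ : Measurable X₁) (hX₂ : Measurable X₂)
    (hindep : IndepFun X₁ X₂ P)
    (hBer : P.map X₁ = ENNReal.ofReal (1 / 2) • Measure.dirac (1 : ℝ) +
      ENNReal.ofReal (1 / 2) • Measure.dirac (0 : ℝ))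
    (σ : NNReal)
    (hGauss : P.map X₂ = gaussianReal 0 (σ ^ 2))
    (X : Ω → ℝ) (hXdef : X = X₁ + X₂)
    (φ : ℝ → ℂ) (hφ : ∀ t : ℝ, φ t = ∫ ω, Complex.exp (Complex.I * (t * X ω)) ∂P) :
    ¬ AntitoneOn (fun t : ℝ => ‖φ t‖) (Ici 0) ∧
      ¬ AntitoneOn (fun d : ℝ => ⨆ a : ℝ, ∫ ω, Real.cos (a + d * X ω) ∂P) (Ioi 0) := by
  have hX : Measurable X := hXdef ▸ hX₁.add hX₂
  have hφX (t : ℝ) : φ t = charFun (P.map X) t := by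
    rw [hφ, charFun_map_real hX.aemeasurable]
    congr with ω
    ring_nf
  have hfactor : charFun (P.map X) = charFun (P.map X₁) * charFun (P.map X₂) :=
    hXdef ▸ hindep.charFun_map_add_eq_mul hX₁.aemeasurable hX₂.aemeasurable
  have hber (t : ℝ) : charFun (P.map X₁) t = (Complex.exp (t * Complex.I) + 1) / 2 := by
    rw [hBer, charFun_smul_dirac_add_smul_dirac _ _ _ _ _ (by norm_num) (by norm_num)]
    norm_num
    ring
  have hπ : φ Real.pi = 0 := by
    rw [hφX, hfactor, Pi.mul_apply, hber, Complex.exp_pi_mul_I]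
    ring
  have h2π : φ (2 * Real.pi) ≠ 0 := by
    rw [hφX, hfactor, Pi.mul_apply, hber, hGauss, charFun_gaussianReal]
    push_cast
    rw [Complex.exp_two_pi_mul_I]
    norm_num
  have hsup (d : ℝ) : ⨆ a : ℝ, ∫ ω, Real.cos (a + d * X ω) ∂P = ‖φ d‖ := by
    rw [hφX, ← iSup_integral_cos_add_mul_eq_norm_charFun_s12]
    congr with a
    exact (integral_map (f := fun x ↦ Real.cos (a + d * x)) hX.aemeasurable
      (by fun_prop)).symm
  have hgrowth : ‖φ Real.pi‖ < ‖φ (2 * Real.pi)‖ := by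
    rwa [hπ, norm_zero, norm_pos_iff]
  have hpi := Real.pi_pos
  refine ⟨fun h ↦ (h (mem_Ici.2 hpi.le) (mem_Ici.2 (by positivity)) (by linarith)).not_gt hgrowth,
    fun h ↦ ?_⟩
  rw [← hsup, ← hsup] at hgrowth
  exact (h (mem_Ioi.2 hpi) (mem_Ioi.2 (by positivity)) (by linarith)).not_gt hgrowth

/-- If `X₁ ~ Bernoulli(1/2)` and `X₂ ~ N(0,σ²)` are independent, then
`X = X₁ + X₂` is not reasonable with respect to `cos` for any `σ > 0`: `|φ_X|` is not
decreasing on `[0,∞)` and `d ↦ sup_a E[cos(a + dX)]` is not decreasing on `(0,∞)`. -/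
theorem stmt12 {Ω : Type*} [MeasurableSpace Ω] (P : Measure Ω) [IsProbabilityMeasure P]
    (X₁ X₂ : Ω → ℝ) (hX₁ : Measurable X₁) (hX₂ : Measurable X₂)
    (hindep : IndepFun X₁ X₂ P)
    (hBer : P.map X₁ = ENNReal.ofReal (1 / 2) • Measure.dirac (1 : ℝ) +
      ENNReal.ofReal (1 / 2) • Measure.dirac (0 : ℝ))
    (σ : NNReal) (hσ : 0 < σ)
    (hGauss : P.map X₂ = gaussianReal 0 (σ ^ 2))
    (X : Ω → ℝ) (hXdef : X = X₁ + X₂)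
    (φ : ℝ → ℂ) (hφ : ∀ t : ℝ, φ t = ∫ ω, Complex.exp (Complex.I * (t * X ω)) ∂P) :
    ¬ AntitoneOn (fun t : ℝ => ‖φ t‖) (Ici 0) ∧
      ¬ AntitoneOn (fun d : ℝ => ⨆ a : ℝ, ∫ ω, Real.cos (a + d * X ω) ∂P) (Ioi 0) :=
  stmt12_general P X₁ X₂ hX₁ hX₂ hindep hBer σ hGauss X hXdef φ hφ
end
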